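/- Let X be a Banach space and T ∈ L(X) with Moore-Penrose inverse T†. Then the following are equivalent: (i) T is EP (T T† = T† T); (ii) N(T) = N(T†); (iii) R(T) = R(T†); (iv) there exists an invertible operator P ∈ L(X) with T† = P T. -/

import Mathlib

/-!
The idempotents `T * S` and `S * T` have the ranges of `T` and `S` and the kernels of `S` and `T`,
so (ii) and (iii) say that these two idempotents share their kernel, resp. their range. A hermitian
idempotent `p` satisfies `exp (iπ p) = 1 - 2p`, so its reflection `1 - 2p` has norm one. If `p`
and `q` are such idempotents with a common kernel, then `(1 - 2p)(1 - 2q) = 1 + 2(p - q)` with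
`(p - q)² = 0`, and a contraction `1 + r` with `r² = 0` has powers `1 + n r`, forcing `r = 0`;
passing to `1 - p`, `1 - q` handles a common range. For (iv), if `x` is a group inverse of `a`
(`axa = a`, `xax = x`, `ax = xa`), then `w = x + 1 - xa` is invertible with inverse
`a + 1 - xa`, and `x = w² a`.
-/

/-- An element `h` of a complex normed algebra is hermitian if
`‖exp(i t h)‖ = 1` for all real `t`. -/
def IsHermitian {A : Type*} [NormedRing A] [NormedAlgebra ℂ A] (h : A) : Prop :=
  ∀ t : ℝ, ‖NormedSpace.exp (((Complex.I * t) : ℂ) • h)‖ = 1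

/-- `x` is a Moore-Penrose inverse of `a`: `a = axa`, `x = xax`, and
`ax`, `xa` are hermitian. -/
def IsMoorePenrose {A : Type*} [NormedRing A] [NormedAlgebra ℂ A] (a x : A) : Prop :=
  a = a * x * a ∧ x = x * a * x ∧ IsHermitian (a * x) ∧ IsHermitian (x * a)

open LinearMap

open Nat in
theorem IsIdempotentElem.exp_smul {A : Type*} [NormedRing A] [NormedAlgebra ℂ A] {p : A}
    (hp : IsIdempotentElem p) (c : ℂ) :
    NormedSpace.exp (c • p) = 1 + (Complex.exp c - 1) • p := by
  have hterm : ∀ n : ℕ, ((n ! : ℂ)⁻¹) • (c • p) ^ n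
      = ((n ! : ℂ)⁻¹ • c ^ n) • p + if n = 0 then 1 - p else 0 := by
    rintro (_ | n)
    · simp
    · simp [smul_pow, hp.pow_succ_eq, smul_smul]
  have hsum : HasSum (fun n : ℕ => ((n ! : ℂ)⁻¹) • (c • p) ^ n)
      (Complex.exp c • p + (1 - p)) := by
    simp only [hterm]
    refine HasSum.add ?_ (hasSum_ite_eq 0 (1 - p))
    rw [Complex.exp_eq_exp_ℂ]
    exact (NormedSpace.exp_series_hasSum_exp' (𝕂 := ℂ) c).smul_const p
  rw [congrFun (NormedSpace.exp_eq_tsum ℂ) (c • p), hsum.tsum_eq, sub_smul, one_smul]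
  abel

theorem IsHermitian.norm_one_sub_two_mul {A : Type*} [NormedRing A] [NormedAlgebra ℂ A] {p : A}
    (hh : IsHermitian p) (hp : IsIdempotentElem p) : ‖1 - 2 * p‖ = 1 := by
  have h := hh Real.pi
  rwa [hp.exp_smul, mul_comm, Complex.exp_pi_mul_I, show (-1 - 1 : ℂ) = -2 by norm_num,
    neg_smul, two_smul, ← two_mul, ← sub_eq_add_neg] at h

theorem eq_zero_of_mul_self_eq_zero_of_norm_one_add_le_one {A : Type*} [NormedRing A]
    [NormedSpace ℝ A] {r : A} (hr : r * r = 0) (hnorm : ‖1 + r‖ ≤ 1) : r = 0 := by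
  have hpow : ∀ n : ℕ, (1 + r) ^ n = 1 + n • r := by
    intro n
    induction n with
    | zero => simp
    | succ n ih =>
      rw [pow_succ, ih, add_mul, one_mul, mul_add, mul_one, smul_mul_assoc, hr, smul_zero,
        add_zero, succ_nsmul]
      abel
  have hbound : ∀ n : ℕ, (n + 1) * ‖r‖ ≤ 1 + ‖(1 : A)‖ := by
    intro n
    calc (n + 1) * ‖r‖ = ‖(n + 1) • r‖ := by rw [RCLike.norm_nsmul ℝ]; simp
      _ = ‖(1 + r) ^ (n + 1) - 1‖ := by rw [hpow]; abel_nf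
      _ ≤ ‖(1 + r) ^ (n + 1)‖ + ‖(1 : A)‖ := norm_sub_le _ _
      _ ≤ ‖1 + r‖ ^ (n + 1) + ‖(1 : A)‖ := by gcongr; exact norm_pow_le' _ n.succ_pos
      _ ≤ 1 + ‖(1 : A)‖ := by gcongr; exact pow_le_one₀ (norm_nonneg _) hnorm
  by_contra hne
  have hpos : 0 < ‖r‖ := norm_pos_iff.mpr hne
  obtain ⟨n, hn⟩ := exists_nat_gt ((1 + ‖(1 : A)‖) / ‖r‖)
  have := hbound n
  rw [div_lt_iff₀ hpos] at hn
  nlinarith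

section Reflection

variable {A : Type*} [NormedRing A] [NormedSpace ℝ A] {p q : A}

theorem IsIdempotentElem.eq_of_mul_eq_left (hp : IsIdempotentElem p) (hq : IsIdempotentElem q)
    (hp1 : ‖1 - 2 * p‖ ≤ 1) (hq1 : ‖1 - 2 * q‖ ≤ 1) (hpq : p * q = p) (hqp : q * p = q) :
    p = q := by
  have hsq : (2 * (p - q)) * (2 * (p - q)) = 0 := by
    calc (2 * (p - q)) * (2 * (p - q)) = 4 * (p * p - p * q - q * p + q * q) := by noncomm_ring
      _ = 0 := by rw [hp.eq, hq.eq, hpq, hqp]; simp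
  have hprod : (1 - 2 * p) * (1 - 2 * q) = 1 + 2 * (p - q) := by
    calc (1 - 2 * p) * (1 - 2 * q) = 1 - 2 * p - 2 * q + 4 * (p * q) := by noncomm_ring
      _ = 1 + 2 * (p - q) := by rw [hpq]; noncomm_ring
  have hnorm : ‖1 + 2 * (p - q)‖ ≤ 1 :=
    calc ‖1 + 2 * (p - q)‖ ≤ ‖1 - 2 * p‖ * ‖1 - 2 * q‖ := hprod ▸ norm_mul_le _ _
      _ ≤ 1 := mul_le_one₀ hp1 (norm_nonneg _) hq1
  have h2 := eq_zero_of_mul_self_eq_zero_of_norm_one_add_le_one hsq hnorm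
  rwa [two_mul, ← two_smul ℝ, smul_eq_zero, sub_eq_zero, or_iff_right two_ne_zero] at h2

theorem IsIdempotentElem.eq_of_mul_eq_right (hp : IsIdempotentElem p) (hq : IsIdempotentElem q)
    (hp1 : ‖1 - 2 * p‖ ≤ 1) (hq1 : ‖1 - 2 * q‖ ≤ 1) (hpq : p * q = q) (hqp : q * p = p) :
    p = q := by
  have hreflect : ∀ a : A, ‖1 - 2 * (1 - a)‖ = ‖1 - 2 * a‖ := fun a => by
    rw [← norm_neg]; congr 1; noncomm_ring
  have hpq' : (1 - p) * (1 - q) = 1 - p := by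
    calc (1 - p) * (1 - q) = 1 - p - q + p * q := by noncomm_ring
      _ = 1 - p := by rw [hpq, sub_add_cancel]
  have hqp' : (1 - q) * (1 - p) = 1 - q := by
    calc (1 - q) * (1 - p) = 1 - q - p + q * p := by noncomm_ring
      _ = 1 - q := by rw [hqp, sub_add_cancel]
  simpa using hp.one_sub.eq_of_mul_eq_left hq.one_sub ((hreflect p).trans_le hp1)
    ((hreflect q).trans_le hq1) hpq' hqp'

end Reflection

namespace LinearMap

variable {R M : Type*} [Ring R] [AddCommGroup M] [Module R M]

theorem ker_mul_eq_of_eq_mul_mul {a b : Module.End R M} (h : a = a * b * a) :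
    ker (b * a) = ker a :=
  le_antisymm
    ((ker_le_ker_comp (b * a) a).trans_eq (by rw [← Module.End.mul_eq_comp, ← mul_assoc, ← h]))
    (ker_le_ker_comp a b)

theorem range_mul_eq_of_eq_mul_mul {a b : Module.End R M} (h : a = a * b * a) :
    range (a * b) = range a :=
  le_antisymm (range_comp_le_range b a)
    ((congrArg range h).trans_le (range_comp_le_range a (a * b)))

theorem IsIdempotentElem.ker_eq_ker_iff {p q : Module.End R M} (hp : IsIdempotentElem p)
    (hq : IsIdempotentElem q) : ker p = ker q ↔ p * q = p ∧ q * p = q := by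
  rw [le_antisymm_iff, and_comm, ← IsIdempotentElem.comp_eq_left_iff hp,
    ← IsIdempotentElem.comp_eq_left_iff hq]
  rfl

theorem IsIdempotentElem.range_eq_range_iff {p q : Module.End R M} (hp : IsIdempotentElem p)
    (hq : IsIdempotentElem q) : range p = range q ↔ p * q = q ∧ q * p = p := by
  rw [le_antisymm_iff, ← IsIdempotentElem.comp_eq_right_iff hp,
    ← IsIdempotentElem.comp_eq_right_iff hq, and_comm]
  rfl

theorem ker_mul_of_isUnit {u : Module.End R M} (hu : IsUnit u) (a : Module.End R M) :
    ker (u * a) = ker a :=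
  ker_comp_of_ker_eq_bot a (ker_eq_bot_of_injective (Module.End.isUnit_iff u |>.mp hu).injective)

end LinearMap

section HermitianProjection

variable {X : Type*} [NormedAddCommGroup X] [NormedSpace ℂ X] {p q : X →L[ℂ] X}

theorem IsHermitian.eq_of_ker_eq (hph : IsHermitian p) (hqh : IsHermitian q)
    (hp : IsIdempotentElem p) (hq : IsIdempotentElem q)
    (h : ker (p : X →ₗ[ℂ] X) = ker (q : X →ₗ[ℂ] X)) : p = q := by
  obtain ⟨hpq, hqp⟩ := (LinearMap.IsIdempotentElem.ker_eq_ker_iff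
    (ContinuousLinearMap.IsIdempotentElem.toLinearMap hp)
    (ContinuousLinearMap.IsIdempotentElem.toLinearMap hq)).mp h
  exact hp.eq_of_mul_eq_left hq (hph.norm_one_sub_two_mul hp).le (hqh.norm_one_sub_two_mul hq).le
    (ContinuousLinearMap.coe_injective hpq) (ContinuousLinearMap.coe_injective hqp)

theorem IsHermitian.eq_of_range_eq (hph : IsHermitian p) (hqh : IsHermitian q)
    (hp : IsIdempotentElem p) (hq : IsIdempotentElem q)
    (h : range (p : X →ₗ[ℂ] X) = range (q : X →ₗ[ℂ] X)) : p = q := by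
  obtain ⟨hpq, hqp⟩ := (LinearMap.IsIdempotentElem.range_eq_range_iff
    (ContinuousLinearMap.IsIdempotentElem.toLinearMap hp)
    (ContinuousLinearMap.IsIdempotentElem.toLinearMap hq)).mp h
  exact hp.eq_of_mul_eq_right hq (hph.norm_one_sub_two_mul hp).le (hqh.norm_one_sub_two_mul hq).le
    (ContinuousLinearMap.coe_injective hpq) (ContinuousLinearMap.coe_injective hqp)

end HermitianProjection

theorem exists_isUnit_eq_mul_of_commute {R : Type*} [Ring R] {a x : R} (ha : a = a * x * a)
    (hx : x = x * a * x) (hc : a * x = x * a) : ∃ u : R, IsUnit u ∧ x = u * a := by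
  have hxaa : x * a * a = a := by rw [← hc]; exact ha.symm
  have hxxa : x * x * a = x := by rw [mul_assoc, ← hc, ← mul_assoc]; exact hx.symm
  have he : x * a * (x * a) = x * a := by rw [← mul_assoc, ← hx]
  have hw : IsUnit (x + 1 - x * a) := by
    refine ⟨⟨_, a + 1 - x * a, ?_, ?_⟩, rfl⟩
    · calc (x + 1 - x * a) * (a + 1 - x * a)
          = 1 + (x - x * x * a) + (a - x * a * a) + (x * a * (x * a) - x * a) := by noncomm_ring
        _ = 1 := by rw [hxxa, hxaa, he]; simp
    · calc (a + 1 - x * a) * (x + 1 - x * a)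
          = 1 + (a * x - x * a) + (a - a * x * a) + (x - x * a * x)
            + (x * a * (x * a) - x * a) := by noncomm_ring
        _ = 1 := by rw [← ha, ← hx, hc, he]; simp
  have hwa : (x + 1 - x * a) * a = x * a := by
    rw [sub_mul, add_mul, one_mul, hxaa, add_sub_cancel_right]
  have hwe : (x + 1 - x * a) * (x * a) = x := by
    rw [sub_mul, add_mul, one_mul, he, ← mul_assoc, hxxa, add_sub_cancel_right]
  exact ⟨(x + 1 - x * a) * (x + 1 - x * a), hw.mul hw, by rw [mul_assoc, hwa, hwe]⟩

theorem EP_operator_characterizations_general {X : Type*} [NormedAddCommGroup X]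
    [NormedSpace ℂ X] (T S : X →L[ℂ] X) (h : IsMoorePenrose T S) :
    (T * S = S * T ↔ LinearMap.ker (T : X →ₗ[ℂ] X) = LinearMap.ker (S : X →ₗ[ℂ] X)) ∧
    (T * S = S * T ↔ LinearMap.range (T : X →ₗ[ℂ] X) = LinearMap.range (S : X →ₗ[ℂ] X)) ∧
    (T * S = S * T ↔ ∃ P : X →L[ℂ] X, IsUnit P ∧ S = P * T) := by
  obtain ⟨hT, hS, hTSh, hSTh⟩ := h
  have hTS : IsIdempotentElem (T * S) := by rw [IsIdempotentElem, ← mul_assoc, ← hT]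
  have hST : IsIdempotentElem (S * T) := by rw [IsIdempotentElem, ← mul_assoc, ← hS]
  have hT' : (T : X →ₗ[ℂ] X) = T * S * T := congrArg ContinuousLinearMap.toLinearMap hT
  have hS' : (S : X →ₗ[ℂ] X) = S * T * S := congrArg ContinuousLinearMap.toLinearMap hS
  have hker : T * S = S * T ↔ ker (T : X →ₗ[ℂ] X) = ker (S : X →ₗ[ℂ] X) := by
    rw [← ker_mul_eq_of_eq_mul_mul hT', ← ker_mul_eq_of_eq_mul_mul hS']
    exact ⟨fun hc => by simp only [← ContinuousLinearMap.toLinearMap_mul, hc],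
      fun hk => (hSTh.eq_of_ker_eq hTSh hST hTS hk).symm⟩
  refine ⟨hker, ?_, ?_⟩
  · rw [← range_mul_eq_of_eq_mul_mul hT', ← range_mul_eq_of_eq_mul_mul hS']
    exact ⟨fun hc => by simp only [← ContinuousLinearMap.toLinearMap_mul, hc],
      hTSh.eq_of_range_eq hSTh hTS hST⟩
  · refine ⟨exists_isUnit_eq_mul_of_commute hT hS, ?_⟩
    rintro ⟨P, hP, rfl⟩
    exact hker.mpr (ker_mul_of_isUnit (hP.map ContinuousLinearMap.toLinearMapRingHom) _).symm

/-- Characterizations of EP operators: `T` is EP iff `N(T) = N(T†)` iff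
`R(T) = R(T†)` iff `T† = P T` for some invertible `P ∈ L(X)`. -/
theorem EP_operator_characterizations {X : Type*} [NormedAddCommGroup X]
    [NormedSpace ℂ X] [CompleteSpace X] (T S : X →L[ℂ] X) (h : IsMoorePenrose T S) :
    (T * S = S * T ↔ LinearMap.ker (T : X →ₗ[ℂ] X) = LinearMap.ker (S : X →ₗ[ℂ] X)) ∧
    (T * S = S * T ↔ LinearMap.range (T : X →ₗ[ℂ] X) = LinearMap.range (S : X →ₗ[ℂ] X)) ∧
    (T * S = S * T ↔ ∃ P : X →L[ℂ] X, IsUnit P ∧ S = P * T) :=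
  EP_operator_characterizations_general T S h
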